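/- arXiv:2107.01568 — 4 statements merged into one kernel-verified Lean document; each statement's English description precedes it below -/
import Mathlib

section
/- Let U:(0,∞)→ℝ be an increasing, strictly concave, continuously differentiable function with U'(∞)=0 and AE(U) := limsup_{x→∞} xU'(x)/U(x) < 1. Then for any q with AE(U) < q < 1 there exists a constant L such that U(v) ≤ L(1+v^q) for all v > 0. -/
open Set Filter Real

/-!
If `U x₀ > 0`, concavity gives `y U'(y) ≤ 2 U(y)` for `y ≥ 2 x₀`, so the elasticity
`y U'(y) / U(y)` is bounded above and its limsup is meaningful: eventually `y U'(y) ≤ q U(y)`.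
This differential inequality says exactly that `U(y) y^(-q)` is nonincreasing, hence
`U(y) ≤ C y^q` for large `y`; monotonicity of `U` bounds it on the remaining bounded range.
-/

lemma MonotoneOn.deriv_nonneg_of_isOpen {f : ℝ → ℝ} {s : Set ℝ} (hf : MonotoneOn f s)
    (hs : IsOpen s) {x : ℝ} (hx : x ∈ s) : 0 ≤ deriv f x := by
  rw [← derivWithin_of_isOpen hs hx]
  exact hf.derivWithin_nonneg

section Elasticity

variable {U : ℝ → ℝ}

lemma ConcaveOn.mul_deriv_le_two_mul (hconc : ConcaveOn ℝ (Ioi 0) U)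
    (hmono : MonotoneOn U (Ioi 0)) {x y : ℝ} (hx : 0 < x) (hUx : 0 ≤ U x) (hxy : 2 * x ≤ y)
    (hdiff : DifferentiableAt ℝ U y) : y * deriv U y ≤ 2 * U y := by
  have hlt : x < y := by linarith
  have hy : (0 : ℝ) < y := by linarith
  have hderiv : 0 ≤ deriv U y := hmono.deriv_nonneg_of_isOpen isOpen_Ioi hy
  have hslope : deriv U y * (y - x) ≤ U y - U x := by
    have := hconc.deriv_le_slope hx hy hlt hdiff
    rwa [slope_def_field, le_div_iff₀ (by linarith)] at this
  nlinarith

lemma isBoundedUnder_le_elasticity (hconc : ConcaveOn ℝ (Ioi 0) U)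
    (hmono : MonotoneOn U (Ioi 0)) (hdiff : ∀ y, 0 < y → DifferentiableAt ℝ U y)
    {x₀ : ℝ} (hx₀ : 0 < x₀) (hUx₀ : 0 < U x₀) :
    IsBoundedUnder (· ≤ ·) atTop (fun y => y * deriv U y / U y) := by
  refine isBoundedUnder_of_eventually_le (a := 2) ?_
  filter_upwards [eventually_ge_atTop (2 * x₀)] with y hy
  have hy₀ : 0 < y := by linarith
  have hUy : 0 < U y := hUx₀.trans_le (hmono hx₀ hy₀ (by linarith))
  rw [div_le_iff₀ hUy]
  exact hconc.mul_deriv_le_two_mul hmono hx₀ hUx₀.le hy (hdiff y hy₀)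

lemma antitoneOn_mul_rpow_neg_of_mul_deriv_le {q x₁ : ℝ} (hx₁ : 0 < x₁)
    (hdiff : ∀ y, x₁ ≤ y → DifferentiableAt ℝ U y)
    (hU : ∀ y, x₁ ≤ y → y * deriv U y ≤ q * U y) :
    AntitoneOn (fun y => U y * y ^ (-q)) (Ici x₁) := by
  have hderiv : ∀ y, x₁ ≤ y →
      HasDerivAt (fun y => U y * y ^ (-q)) (deriv U y * y ^ (-q) + U y * (-q * y ^ (-q - 1))) y :=
    fun y hy => (hdiff y hy).hasDerivAt.mul
      (hasDerivAt_rpow_const (Or.inl (hx₁.trans_le hy).ne'))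
  refine antitoneOn_of_deriv_nonpos (convex_Ici x₁)
    (fun y hy => (hderiv y hy).continuousAt.continuousWithinAt) ?_ ?_
  · rw [interior_Ici]
    exact fun y hy => (hderiv y (le_of_lt hy)).differentiableAt.differentiableWithinAt
  · rw [interior_Ici]
    intro y hy
    have hy₀ : 0 < y := hx₁.trans hy
    have hsplit : y ^ (-q) = y ^ (-q - 1) * y := by
      rw [← rpow_add_one hy₀.ne']
      ring_nf
    rw [(hderiv y (le_of_lt hy)).deriv, hsplit]
    have hfactor : deriv U y * (y ^ (-q - 1) * y) + U y * (-q * y ^ (-q - 1))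
        = y ^ (-q - 1) * (y * deriv U y - q * U y) := by ring
    rw [hfactor]
    exact mul_nonpos_of_nonneg_of_nonpos (rpow_pos_of_pos hy₀ _).le
      (by linarith [hU y (le_of_lt hy)])

lemma le_mul_rpow_of_mul_deriv_le {q x₁ : ℝ} (hx₁ : 0 < x₁)
    (hdiff : ∀ y, x₁ ≤ y → DifferentiableAt ℝ U y)
    (hU : ∀ y, x₁ ≤ y → y * deriv U y ≤ q * U y) {y : ℝ} (hy : x₁ ≤ y) :
    U y ≤ U x₁ * x₁ ^ (-q) * y ^ q := by
  have hanti : U y * y ^ (-q) ≤ U x₁ * x₁ ^ (-q) :=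
    antitoneOn_mul_rpow_neg_of_mul_deriv_le hx₁ hdiff hU self_mem_Ici hy hy
  have hyq : 0 < y ^ q := rpow_pos_of_pos (hx₁.trans_le hy) q
  rw [rpow_neg (hx₁.trans_le hy).le, ← div_eq_mul_inv, div_le_iff₀ hyq] at hanti
  exact hanti

lemma exists_le_mul_one_add_rpow_of_le_mul_rpow (hmono : MonotoneOn U (Ioi 0))
    {q C x₁ : ℝ} (hx₁ : 0 < x₁) (hbound : ∀ y, x₁ ≤ y → U y ≤ C * y ^ q) :
    ∃ L : ℝ, ∀ v : ℝ, 0 < v → U v ≤ L * (1 + v ^ q) := by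
  refine ⟨|U x₁| + |C|, fun v hv => ?_⟩
  have hvq : 0 < v ^ q := rpow_pos_of_pos hv q
  have hL : 0 ≤ |U x₁| + |C| := by positivity
  rcases le_total v x₁ with hvx | hxv
  · have hUv : U v ≤ |U x₁| := (hmono hv hx₁ hvx).trans (le_abs_self _)
    nlinarith [abs_nonneg C]
  · have hUv : U v ≤ |C| * v ^ q :=
      (hbound v hxv).trans (mul_le_mul_of_nonneg_right (le_abs_self C) hvq.le)
    nlinarith [abs_nonneg (U x₁)]

end Elasticity

theorem stmt4_general (U : ℝ → ℝ)
    (hU_mono : StrictMonoOn U (Set.Ioi 0))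
    (hU_conc : StrictConcaveOn ℝ (Set.Ioi 0) U)
    (hU_diff : ContDiffOn ℝ 1 U (Set.Ioi 0)) :
    ∀ q : ℝ, Filter.limsup (fun y => y * deriv U y / U y) Filter.atTop < q → q < 1 →
      ∃ L : ℝ, ∀ v : ℝ, 0 < v → U v ≤ L * (1 + v ^ q) := by
  intro q hq _
  have hdiff : ∀ y, 0 < y → DifferentiableAt ℝ U y := fun y hy =>
    (hU_diff.differentiableOn one_ne_zero y hy).differentiableAt (isOpen_Ioi.mem_nhds hy)
  by_cases hpos : ∃ x₀, 0 < x₀ ∧ 0 < U x₀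
  swap
  · push Not at hpos
    exact ⟨0, fun v hv => by simpa using hpos v hv⟩
  obtain ⟨x₀, hx₀, hUx₀⟩ := hpos
  have hev : ∀ᶠ y in atTop, y * deriv U y / U y < q ∧ x₀ ≤ y :=
    (eventually_lt_of_limsup_lt hq (isBoundedUnder_le_elasticity hU_conc.concaveOn
      hU_mono.monotoneOn hdiff hx₀ hUx₀)).and (eventually_ge_atTop x₀)
  obtain ⟨x₁, hx₁⟩ := hev.exists_forall_of_atTop
  have hx₁₀ : 0 < x₁ := hx₀.trans_le (hx₁ x₁ le_rfl).2
  have hineq : ∀ y, x₁ ≤ y → y * deriv U y ≤ q * U y := fun y hy => by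
    obtain ⟨hlt, hx₀y⟩ := hx₁ y hy
    have hUy : 0 < U y := hUx₀.trans_le (hU_mono.monotoneOn hx₀ (hx₀.trans_le hx₀y) hx₀y)
    rw [div_lt_iff₀ hUy] at hlt
    linarith
  exact exists_le_mul_one_add_rpow_of_le_mul_rpow hU_mono.monotoneOn hx₁₀
    (fun y hy => le_mul_rpow_of_mul_deriv_le hx₁₀
      (fun z hz => hdiff z (hx₁₀.trans_le hz)) hineq hy)

/-- **Polynomial growth from reasonable asymptotic elasticity** (Lemma 6.3 of
Kramkov–Schachermayer).  If `U` is increasing, strictly concave, continuously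
differentiable on `(0,∞)`, with `U'(∞) = 0` and `AE(U) = limsup_{y→∞} y U'(y)/U(y) < 1`,
then for every `q` with `AE(U) < q < 1` there is a constant `L` such that
`U(v) ≤ L (1 + v^q)` for all `v > 0`. -/
theorem stmt4 (U : ℝ → ℝ)
    (hU_mono : StrictMonoOn U (Set.Ioi 0))
    (hU_conc : StrictConcaveOn ℝ (Set.Ioi 0) U)
    (hU_diff : ContDiffOn ℝ 1 U (Set.Ioi 0))
    (hInada : Filter.Tendsto (deriv U) Filter.atTop (nhds 0))
    (hAE : Filter.limsup (fun y => y * deriv U y / U y) Filter.atTop < 1) :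
    ∀ q : ℝ, Filter.limsup (fun y => y * deriv U y / U y) Filter.atTop < q → q < 1 →
      ∃ L : ℝ, ∀ v : ℝ, 0 < v → U v ≤ L * (1 + v ^ q) :=
  stmt4_general U hU_mono hU_conc hU_diff
end

section
/- Let S be a continuous adapted process on a filtered probability space satisfying the usual conditions. If S is sticky with respect to deterministic times (i.e., for every δ>0 and t < T, P(sup_{t≤u≤T}|S_u - S_t| < δ | ℱ_t) > 0 a.s.), and if the conditional law of S given ℱ_t equals the conditional law of S given a larger σ-field 𝒢_t ⊇ ℱ_t for each t, then S is sticky at deterministic times with respect to the enlarged filtration (𝒢_t). -/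
/-! The event `{∀ u ∈ [t, T], |S_u - S_t| < δ}` is determined by the path of `S`: by compactness
a strict bound on a continuous path holds with some margin `1/(n+1)`, and a non-strict bound
needs checking only on a countable dense set of times. The hypothesis on conditional laws
therefore identifies its conditional probabilities given `ℱₜ` and `𝒢ₜ` almost surely, and
stickiness passes from one to the other. -/

open MeasureTheory Set

lemma ContinuousOn.forall_le_of_subset_closure {α β : Type*} [TopologicalSpace α]
    [TopologicalSpace β] [Preorder β] [ClosedIicTopology β] {f : α → β} {s D : Set α} {c : β}
    (hf : ContinuousOn f s) (hDs : D ⊆ s) (hsD : s ⊆ closure D) (hD : ∀ u ∈ D, f u ≤ c) :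
    ∀ u ∈ s, f u ≤ c := fun u hu => by
  simpa only [closure_Iic, mem_Iic] using ((hf u hu).mono hDs).mem_closure (t := Iic c) (hsD hu) hD

lemma IsCompact.exists_forall_le_sub_of_forall_lt {α : Type*} [TopologicalSpace α]
    {f : α → ℝ} {s : Set α} {c : ℝ} (hs : IsCompact s) (hf : ContinuousOn f s)
    (hlt : ∀ u ∈ s, f u < c) : ∃ n : ℕ, ∀ u ∈ s, f u ≤ c - 1 / (n + 1) := by
  rcases s.eq_empty_or_nonempty with rfl | hne
  · exact ⟨0, by simp⟩
  obtain ⟨x, hx, hmax⟩ := hs.exists_isMaxOn hne hf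
  obtain ⟨n, hn⟩ := exists_nat_one_div_lt (sub_pos.2 (hlt x hx))
  exact ⟨n, fun u hu => by linarith [isMaxOn_iff.1 hmax u hu]⟩

lemma measurableSet_forall_lt_of_continuousOn {Ω ι : Type*} {m : MeasurableSpace Ω}
    [TopologicalSpace ι] [TopologicalSpace.PseudoMetrizableSpace ι]
    {X : ι → Ω → ℝ} {s : Set ι} (hs : IsCompact s) (hX : ∀ u ∈ s, Measurable (X u))
    (hcont : ∀ ω, ContinuousOn (fun u => X u ω) s) (c : ℝ) :
    MeasurableSet {ω | ∀ u ∈ s, X u ω < c} := by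
  obtain ⟨D, hDs, hDc, hsD⟩ := hs.isSeparable.exists_countable_dense_subset
  have hset : {ω | ∀ u ∈ s, X u ω < c} =
      ⋃ n : ℕ, ⋂ u ∈ D, {ω | X u ω ≤ c - 1 / (n + 1)} := by
    ext ω
    simp only [mem_ofPred_eq, mem_iUnion, mem_iInter]
    refine ⟨fun h => ?_, fun ⟨n, hn⟩ u hu => ?_⟩
    · obtain ⟨n, hn⟩ := hs.exists_forall_le_sub_of_forall_lt (hcont ω) h
      exact ⟨n, fun u hu => hn u (hDs hu)⟩
    · have := (hcont ω).forall_le_of_subset_closure hDs hsD hn u hu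
      have : (0 : ℝ) < 1 / (n + 1) := by positivity
      linarith
  rw [hset]
  exact .iUnion fun n => .biInter hDc fun u hu =>
    measurableSet_le (hX u (hDs hu)) measurable_const

theorem stmt10_general {Ω : Type*} [mΩ : MeasurableSpace Ω] (μ : Measure Ω) [IsProbabilityMeasure μ]
    (T : ℝ)
    (F G : ℝ → MeasurableSpace Ω)
    (S : ℝ → Ω → ℝ)
    (hScont : ∀ ω, ContinuousOn (fun t => S t ω) (Set.Icc 0 T))
    (hlaw : ∀ t ∈ Set.Icc (0:ℝ) T, ∀ A : Set Ω,
      MeasurableSet[⨆ u ∈ Set.Icc (0:ℝ) T, MeasurableSpace.comap (S u) inferInstance] A →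
      μ[A.indicator (fun _ => (1:ℝ)) | F t] =ᵐ[μ] μ[A.indicator (fun _ => (1:ℝ)) | G t])
    (hsticky : ∀ δ : ℝ, 0 < δ → ∀ t ∈ Set.Ico (0:ℝ) T,
      ∀ᵐ ω ∂μ, 0 < (μ[Set.indicator {ω' | ∀ u ∈ Set.Icc t T, |S u ω' - S t ω'| < δ}
        (fun _ => (1:ℝ)) | F t]) ω) :
    ∀ δ : ℝ, 0 < δ → ∀ t ∈ Set.Ico (0:ℝ) T,
      ∀ᵐ ω ∂μ, 0 < (μ[Set.indicator {ω' | ∀ u ∈ Set.Icc t T, |S u ω' - S t ω'| < δ}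
        (fun _ => (1:ℝ)) | G t]) ω := by
  intro δ hδ t ht
  have ht0T : t ∈ Icc 0 T := Ico_subset_Icc_self ht
  have htT : Icc t T ⊆ Icc 0 T := Icc_subset_Icc_left ht.1
  let pathσ := ⨆ u ∈ Icc (0:ℝ) T, MeasurableSpace.comap (S u) inferInstance
  have hSmeas : ∀ u ∈ Icc 0 T, Measurable[pathσ] (S u) := fun u hu =>
    measurable_iff_comap_le.2 (le_biSup (fun u => MeasurableSpace.comap (S u) _) hu)
  have hA : MeasurableSet[pathσ] {ω | ∀ u ∈ Icc t T, |S u ω - S t ω| < δ} :=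
    measurableSet_forall_lt_of_continuousOn isCompact_Icc
      (fun u hu => ((hSmeas u (htT hu)).sub (hSmeas t ht0T)).abs)
      (fun ω => (((hScont ω).mono htT).sub continuousOn_const).abs) δ
  filter_upwards [hlaw t ht0T _ hA, hsticky δ hδ t ht] with ω hFG hF
  exact hFG ▸ hF

/-- **Stickiness at deterministic times transfers to an enlarged filtration.**
Let `S` be continuous adapted to `(ℱₜ)`.  If `S` is sticky at deterministic times with
respect to `(ℱₜ)`, i.e. `P(sup_{t ≤ u ≤ T} |S_u - S_t| < δ | ℱₜ) > 0` a.s. for all `δ > 0`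
and `t ∈ [0,T)`, and if the conditional law of (the path of) `S` given `ℱₜ` coincides with
its conditional law given the larger σ-field `𝒢ₜ ⊇ ℱₜ` for each `t`, then `S` is sticky at
deterministic times with respect to `(𝒢ₜ)`. -/
theorem stmt10 {Ω : Type*} [mΩ : MeasurableSpace Ω] (μ : Measure Ω) [IsProbabilityMeasure μ]
    (T : ℝ) (hT : 0 < T)
    (F G : ℝ → MeasurableSpace Ω)
    (hFmono : ∀ s t : ℝ, s ≤ t → F s ≤ F t) (hGmono : ∀ s t : ℝ, s ≤ t → G s ≤ G t)
    (hFG : ∀ t, F t ≤ G t) (hGle : ∀ t, G t ≤ mΩ)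
    (S : ℝ → Ω → ℝ)
    (hScont : ∀ ω, ContinuousOn (fun t => S t ω) (Set.Icc 0 T))
    (hSadapt : ∀ t ∈ Set.Icc (0:ℝ) T, Measurable[F t] (S t))
    (hlaw : ∀ t ∈ Set.Icc (0:ℝ) T, ∀ A : Set Ω,
      MeasurableSet[⨆ u ∈ Set.Icc (0:ℝ) T, MeasurableSpace.comap (S u) inferInstance] A →
      μ[A.indicator (fun _ => (1:ℝ)) | F t] =ᵐ[μ] μ[A.indicator (fun _ => (1:ℝ)) | G t])
    (hsticky : ∀ δ : ℝ, 0 < δ → ∀ t ∈ Set.Ico (0:ℝ) T,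
      ∀ᵐ ω ∂μ, 0 < (μ[Set.indicator {ω' | ∀ u ∈ Set.Icc t T, |S u ω' - S t ω'| < δ}
        (fun _ => (1:ℝ)) | F t]) ω) :
    ∀ δ : ℝ, 0 < δ → ∀ t ∈ Set.Ico (0:ℝ) T,
      ∀ᵐ ω ∂μ, 0 < (μ[Set.indicator {ω' | ∀ u ∈ Set.Icc t T, |S u ω' - S t ω'| < δ}
        (fun _ => (1:ℝ)) | G t]) ω :=
  stmt10_general (mΩ := mΩ) μ T F G S hScont hlaw hsticky
end

section
/- Let Ŝ be a process with (1-κ)S_t ≤ Ŝ_t ≤ (1+κ)S_t for all t, where S > 0 and κ ∈ (0,1). Then for any right-continuous bounded-variation strategy γ with γ_{0-}=0, the frictionless wealth ∫₀ᵗ γ_{u-} dŜ_u dominates the liquidation value under transaction costs: ∫₀ᵗ γ_{u-} dŜ_u ≥ V^γ_t = γ_t S_t - ∫₀ᵗ S_u dγ_u - κ|γ_t|S_t - κ∫₀ᵗ S_u|dγ_u|, for all t ∈ [0,T]. -/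
/-!
Once the frictionless wealth is written as `γ_t Ŝ_t - ∫ Ŝ dγ⁺ + ∫ Ŝ dγ⁻`, the comparison
with the liquidation value is termwise: purchases `dγ⁺` are made at
`Ŝ ≤ (1 + κ) S`, sales `dγ⁻` at `Ŝ ≥ (1 - κ) S`, and the final position is worth
`γ_t Ŝ_t ≥ γ_t S_t - κ |γ_t| S_t`. The only analytic input is that the right-continuous `Ŝ`
is measurable, so that these integrals are not junk.
-/

open MeasureTheory Set Filter Topology

lemma lt_floor_mul_add_one_div (x : ℝ) (n : ℕ) : x < (⌊x * (n + 1)⌋ + 1) / ((n : ℝ) + 1) := by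
  rw [lt_div_iff₀ (by positivity)]
  exact Int.lt_floor_add_one _

lemma tendsto_floor_mul_add_one_div_nhdsGT (x : ℝ) :
    Tendsto (fun n : ℕ => (⌊x * (n + 1)⌋ + 1) / ((n : ℝ) + 1)) atTop (𝓝[>] x) := by
  have hle : ∀ n : ℕ, (⌊x * (n + 1)⌋ + 1) / ((n : ℝ) + 1) ≤ x + 1 / ((n : ℝ) + 1) := fun n => by
    rw [div_le_iff₀ (by positivity), add_mul, one_div_mul_cancel (by positivity)]
    gcongr
    exact Int.floor_le _
  refine tendsto_nhdsWithin_iff.2 ⟨?_, Eventually.of_forall (lt_floor_mul_add_one_div x)⟩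
  have hupper := tendsto_const_nhds (x := x) |>.add tendsto_one_div_add_atTop_nhds_zero_nat
  rw [add_zero] at hupper
  exact tendsto_of_tendsto_of_tendsto_of_le_of_le tendsto_const_nhds hupper
    (fun n => (lt_floor_mul_add_one_div x n).le) hle

theorem aestronglyMeasurable_restrict_Icc_of_continuousWithinAt_Ici {β : Type*}
    [TopologicalSpace β] [TopologicalSpace.PseudoMetrizableSpace β] {f : ℝ → β} {a b : ℝ}
    (μ : Measure ℝ) (hf : ∀ x ∈ Ico a b, ContinuousWithinAt f (Ici x) x) :
    AEStronglyMeasurable f (μ.restrict (Icc a b)) := by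
  -- Sample `f` on a grid just to the right of `x`, clipped at `b`: each approximant factors
  -- through `⌊·⌋`, and right-continuity makes them converge on `[a, b]`.
  set d : ℕ → ℝ → ℝ := fun n x => (⌊x * (n + 1)⌋ + 1) / ((n : ℝ) + 1)
  refine aestronglyMeasurable_of_tendsto_ae atTop (f := fun n x => f (min b (d n x)))
    (fun n => ?_) ?_
  · have hfloor : Measurable fun x : ℝ => ⌊x * (n + 1)⌋ :=
      Int.measurable_floor.comp (measurable_id.mul_const _)
    exact (StronglyMeasurable.of_discrete.comp_measurable hfloor
      (f := fun k : ℤ => f (min b ((k + 1) / ((n : ℝ) + 1))))).aestronglyMeasurable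
  refine ae_restrict_of_forall_mem measurableSet_Icc fun x ⟨hax, hxb⟩ => ?_
  have hd := tendsto_floor_mul_add_one_div_nhdsGT x
  rcases hxb.lt_or_eq with hxb | rfl
  · have hmin : ∀ᶠ n in atTop, d n x = min b (d n x) :=
      (hd.mono_right nhdsWithin_le_nhds |>.eventually (gt_mem_nhds hxb)).mono
        fun n hn => (min_eq_right hn.le).symm
    exact (hf x ⟨hax, hxb⟩).tendsto.comp
      ((hd.mono_right (nhdsWithin_mono _ Ioi_subset_Ici_self)).congr' hmin)
  · have hconst : ∀ n, min x (d n x) = x := fun n => min_eq_left (lt_floor_mul_add_one_div x n).le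
    simp only [hconst, tendsto_const_nhds]

lemma neg_mul_abs_le_mul_sub {κ s ŝ g : ℝ} (hbid : (1 - κ) * s ≤ ŝ) (hask : ŝ ≤ (1 + κ) * s) :
    -(κ * |g| * s) ≤ g * (ŝ - s) := by
  have hspread : |ŝ - s| ≤ κ * s := abs_le.2 ⟨by linarith, by linarith⟩
  calc -(κ * |g| * s) = -(|g| * (κ * s)) := by ring
    _ ≤ -(|g| * |ŝ - s|) := by gcongr
    _ = -|g * (ŝ - s)| := by rw [abs_mul]
    _ ≤ g * (ŝ - s) := neg_abs_le _

theorem liquidation_value_le_shadow_wealth {α : Type*} [MeasurableSpace α]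
    {μp μm : Measure α} {s : Set α} (hs : MeasurableSet s) {κ : ℝ} {S Ŝ : α → ℝ}
    (hSp : IntegrableOn S s μp) (hSm : IntegrableOn S s μm)
    (hŜp : IntegrableOn Ŝ s μp) (hŜm : IntegrableOn Ŝ s μm)
    (hbid : ∀ u ∈ s, (1 - κ) * S u ≤ Ŝ u) (hask : ∀ u ∈ s, Ŝ u ≤ (1 + κ) * S u)
    {g s₀ ŝ₀ : ℝ} (hbid₀ : (1 - κ) * s₀ ≤ ŝ₀) (hask₀ : ŝ₀ ≤ (1 + κ) * s₀) :
    g * s₀ - ((∫ u in s, S u ∂μp) - ∫ u in s, S u ∂μm) - κ * |g| * s₀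
        - κ * ((∫ u in s, S u ∂μp) + ∫ u in s, S u ∂μm)
      ≤ g * ŝ₀ - ((∫ u in s, Ŝ u ∂μp) - ∫ u in s, Ŝ u ∂μm) := by
  have hbuy : ∫ u in s, Ŝ u ∂μp ≤ (1 + κ) * ∫ u in s, S u ∂μp := by
    rw [← integral_const_mul]
    exact setIntegral_mono_on hŜp (hSp.const_mul _) hs hask
  have hsell : (1 - κ) * ∫ u in s, S u ∂μm ≤ ∫ u in s, Ŝ u ∂μm := by
    rw [← integral_const_mul]
    exact setIntegral_mono_on (hSm.const_mul _) hŜm hs hbid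
  linarith [neg_mul_abs_le_mul_sub (g := g) hbid₀ hask₀]

theorem stmt16_general
    (T κ : ℝ)
    (S Shat : ℝ → ℝ)
    (hS_cont : ContinuousOn S (Set.Icc 0 T))
    (hShat_rc : ∀ t ∈ Set.Ico (0:ℝ) T, ContinuousWithinAt Shat (Set.Ici t) t)
    (hbid : ∀ t ∈ Set.Icc (0:ℝ) T, (1 - κ) * S t ≤ Shat t)
    (hask : ∀ t ∈ Set.Icc (0:ℝ) T, Shat t ≤ (1 + κ) * S t)
    (γp γm : StieltjesFunction ℝ)
    (γ : ℝ → ℝ)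
    (t : ℝ) (ht : t ∈ Set.Icc (0:ℝ) T) :
    γ t * S t
      - ((∫ u in Set.Icc (0:ℝ) t, S u ∂γp.measure)
          - ∫ u in Set.Icc (0:ℝ) t, S u ∂γm.measure)
      - κ * |γ t| * S t
      - κ * ((∫ u in Set.Icc (0:ℝ) t, S u ∂γp.measure)
          + ∫ u in Set.Icc (0:ℝ) t, S u ∂γm.measure)
    ≤ γ t * Shat t
      - ((∫ u in Set.Icc (0:ℝ) t, Shat u ∂γp.measure)
          - ∫ u in Set.Icc (0:ℝ) t, Shat u ∂γm.measure) := by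
  have hsub : Icc 0 t ⊆ Icc 0 T := Icc_subset_Icc_right ht.2
  have hS_int (μ : Measure ℝ) [IsFiniteMeasureOnCompacts μ] : IntegrableOn S (Icc 0 t) μ :=
    (hS_cont.mono hsub).integrableOn_Icc
  have hShat_int (μ : Measure ℝ) [IsFiniteMeasureOnCompacts μ] :
      IntegrableOn Shat (Icc 0 t) μ :=
    integrable_of_le_of_le
      (aestronglyMeasurable_restrict_Icc_of_continuousWithinAt_Ici μ
        fun u hu => hShat_rc u ⟨hu.1, hu.2.trans_le ht.2⟩)
      (ae_restrict_of_forall_mem measurableSet_Icc fun u hu => hbid u (hsub hu))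
      (ae_restrict_of_forall_mem measurableSet_Icc fun u hu => hask u (hsub hu))
      ((hS_int μ).const_mul _) ((hS_int μ).const_mul _)
  exact liquidation_value_le_shadow_wealth measurableSet_Icc (hS_int _) (hS_int _)
    (hShat_int _) (hShat_int _) (fun u hu => hbid u (hsub hu)) (fun u hu => hask u (hsub hu))
    (hbid t ht) (hask t ht)

/-- **The frictionless shadow wealth dominates the liquidation value.**  Let
`(1-κ)S ≤ Ŝ ≤ (1+κ)S` on `[0,T]` with `S > 0` continuous and `Ŝ` right-continuous, and
let `γ = γ⁺ - γ⁻` be right-continuous of bounded variation with `γ(0-) = 0` (encoded via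
Stieltjes functions vanishing on `(-∞,0)`).  Then, with the frictionless wealth defined
via integration by parts `∫₀ᵗ γ_{u-} dŜ_u = γ_t Ŝ_t - ∫₀ᵗ Ŝ_u dγ_u`, one has
`∫₀ᵗ γ_{u-} dŜ_u ≥ V^γ_t = γ_t S_t - ∫₀ᵗ S_u dγ_u - κ|γ_t|S_t - κ∫₀ᵗ S_u |dγ_u|`. -/
theorem stmt16
    (T κ : ℝ) (hT : 0 < T) (hκ : κ ∈ Set.Ioo (0:ℝ) 1)
    (S Shat : ℝ → ℝ)
    (hS_cont : ContinuousOn S (Set.Icc 0 T))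
    (hS_pos : ∀ t ∈ Set.Icc (0:ℝ) T, 0 < S t)
    (hShat_rc : ∀ t ∈ Set.Ico (0:ℝ) T, ContinuousWithinAt Shat (Set.Ici t) t)
    (hbid : ∀ t ∈ Set.Icc (0:ℝ) T, (1 - κ) * S t ≤ Shat t)
    (hask : ∀ t ∈ Set.Icc (0:ℝ) T, Shat t ≤ (1 + κ) * S t)
    (γp γm : StieltjesFunction ℝ)
    (hγp0 : ∀ t < (0:ℝ), γp t = 0) (hγm0 : ∀ t < (0:ℝ), γm t = 0)
    (γ : ℝ → ℝ) (hγ : ∀ t, γ t = γp t - γm t)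
    (t : ℝ) (ht : t ∈ Set.Icc (0:ℝ) T) :
    γ t * S t
      - ((∫ u in Set.Icc (0:ℝ) t, S u ∂γp.measure)
          - ∫ u in Set.Icc (0:ℝ) t, S u ∂γm.measure)
      - κ * |γ t| * S t
      - κ * ((∫ u in Set.Icc (0:ℝ) t, S u ∂γp.measure)
          + ∫ u in Set.Icc (0:ℝ) t, S u ∂γm.measure)
    ≤ γ t * Shat t
      - ((∫ u in Set.Icc (0:ℝ) t, Shat u ∂γp.measure)
          - ∫ u in Set.Icc (0:ℝ) t, Shat u ∂γm.measure) :=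
  stmt16_general T κ S Shat hS_cont hShat_rc hbid hask γp γm γ t ht
end

section
/- Let S:[0,T]→ℝ be continuous and satisfy: for every s ∈ [0,T), inf{t>s : S_t > S_s} = s whenever S is not eventually below S_s, in the two-way crossing sense. If Ŝ is constant on a nondegenerate interval [σ,τ] (σ<τ) with (1-κ)S_t ≤ Ŝ_t ≤ (1+κ)S_t for all t and κ∈(0,1), and S crosses both up and down immediately after σ (i.e., for every δ>0 there exist t₁,t₂ ∈ (σ,σ+δ) with S_{t₁} > S_σ and S_{t₂} < S_σ), then (1-κ)S_σ < Ŝ_σ < (1+κ)S_σ. -/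
open Set

theorem mul_lt_of_const_of_mul_le {S h : ℝ → ℝ} {c σ τ : ℝ} (hc : 0 < c)
    (hle : ∀ t ∈ Icc σ τ, c * S t ≤ h t) (hconst : ∀ t ∈ Icc σ τ, h t = h σ)
    (hup : ∃ t ∈ Ioo σ τ, S σ < S t) : c * S σ < h σ := by
  obtain ⟨t, ht, hSt⟩ := hup
  calc c * S σ < c * S t := mul_lt_mul_of_pos_left hSt hc
    _ ≤ h t := hle t (Ioo_subset_Icc_self ht)
    _ = h σ := hconst t (Ioo_subset_Icc_self ht)

theorem lt_mul_of_const_of_le_mul {S h : ℝ → ℝ} {c σ τ : ℝ} (hc : 0 < c)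
    (hle : ∀ t ∈ Icc σ τ, h t ≤ c * S t) (hconst : ∀ t ∈ Icc σ τ, h t = h σ)
    (hdown : ∃ t ∈ Ioo σ τ, S t < S σ) : h σ < c * S σ := by
  obtain ⟨t, ht, hSt⟩ := hdown
  calc h σ = h t := (hconst t (Ioo_subset_Icc_self ht)).symm
    _ ≤ c * S t := hle t (Ioo_subset_Icc_self ht)
    _ < c * S σ := mul_lt_mul_of_pos_left hSt hc

theorem stmt19_general (κ σ τ : ℝ) (hκ : κ ∈ Set.Ioo (0:ℝ) 1) (hστ : σ < τ)
    (S Shat : ℝ → ℝ)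
    (hbid : ∀ t, (1 - κ) * S t ≤ Shat t)
    (hask : ∀ t, Shat t ≤ (1 + κ) * S t)
    (hconst : ∀ t ∈ Set.Icc σ τ, Shat t = Shat σ)
    (hcross : ∀ δ : ℝ, 0 < δ →
      (∃ t₁ ∈ Set.Ioo σ (σ + δ), S σ < S t₁) ∧
      (∃ t₂ ∈ Set.Ioo σ (σ + δ), S t₂ < S σ)) :
    (1 - κ) * S σ < Shat σ ∧ Shat σ < (1 + κ) * S σ := by
  obtain ⟨hκ0, hκ1⟩ := hκ
  obtain ⟨hup, hdown⟩ := hcross (τ - σ) (sub_pos.mpr hστ)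
  rw [add_sub_cancel] at hup hdown
  exact ⟨mul_lt_of_const_of_mul_le (by linarith) (fun t _ => hbid t) hconst hup,
    lt_mul_of_const_of_le_mul (by linarith) (fun t _ => hask t) hconst hdown⟩

/-- **The shadow price stays strictly inside the bid–ask spread** (pathwise core of
Step II of Proposition 2.1).  Let `S > 0` be continuous, `κ ∈ (0,1)`, and let `Ŝ` with
`(1-κ)S ≤ Ŝ ≤ (1+κ)S` be constant on a nondegenerate interval `[σ,τ]`.  If `S` crosses
both up and down immediately after `σ`, then `(1-κ)S_σ < Ŝ_σ < (1+κ)S_σ`. -/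
theorem stmt19 (κ σ τ : ℝ) (hκ : κ ∈ Set.Ioo (0:ℝ) 1) (hστ : σ < τ)
    (S Shat : ℝ → ℝ)
    (hScont : Continuous S) (hSpos : ∀ t, 0 < S t)
    (hbid : ∀ t, (1 - κ) * S t ≤ Shat t)
    (hask : ∀ t, Shat t ≤ (1 + κ) * S t)
    (hconst : ∀ t ∈ Set.Icc σ τ, Shat t = Shat σ)
    (hcross : ∀ δ : ℝ, 0 < δ →
      (∃ t₁ ∈ Set.Ioo σ (σ + δ), S σ < S t₁) ∧
      (∃ t₂ ∈ Set.Ioo σ (σ + δ), S t₂ < S σ)) :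
    (1 - κ) * S σ < Shat σ ∧ Shat σ < (1 + κ) * S σ :=
  stmt19_general κ σ τ hκ hστ S Shat hbid hask hconst hcross
end
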